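/- arXiv:2210.17300 — 5 statements merged into one kernel-verified Lean document; each statement's English description precedes it below -/
import Mathlib

section
/- Perron's theorem (existence): Let A be an n×n matrix of real numbers (n ≥ 1) all of whose entries are strictly positive. Then there exists a real number r > 0 and a vector v ∈ ℝⁿ with all entries strictly positive such that A·v = r·v. -/
/-- Perron's theorem (existence): a square real matrix with strictly positive
entries has a positive eigenvalue with a strictly positive eigenvector. -/
theorem perron_existence (n : ℕ) (hn : 1 ≤ n) (A : Matrix (Fin n) (Fin n) ℝ)
    (hA : ∀ i j, 0 < A i j) :
    ∃ (r : ℝ) (v : Fin n → ℝ), 0 < r ∧ (∀ i, 0 < v i) ∧ A.mulVec v = r • v := by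
  haveI : Nonempty (Fin n) := ⟨⟨0, hn⟩⟩
  set S : Set (Fin n → ℝ) := stdSimplex ℝ (Fin n) with hS
  set M : ℝ := ∑ i, ∑ j, A i j with hM
  set T : Set ℝ := {t : ℝ | 0 ≤ t ∧ ∃ v ∈ S, ∀ i, t * v i ≤ A.mulVec v i} with hT
  -- uniform vector witness
  set t₀ : ℝ := (Finset.univ.inf' Finset.univ_nonempty (fun i => ∑ j, A i j)) / n with ht₀
  have ht₀pos : 0 < t₀ := by
    apply div_pos
    · rw [Finset.lt_inf'_iff]
      intro i _
      exact Finset.sum_pos (fun j _ => hA i j) Finset.univ_nonempty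
    · exact_mod_cast hn
  have ht₀T : t₀ ∈ T := by
    refine ⟨ht₀pos.le, fun _ => (n : ℝ)⁻¹, ⟨fun i => by positivity, ?_⟩, ?_⟩
    · simp [Finset.sum_const, Finset.card_univ]
      field_simp
    · intro i
      rw [Matrix.mulVec, dotProduct]
      have hinf0 : 0 ≤ Finset.univ.inf' Finset.univ_nonempty (fun i => ∑ j, A i j) :=
        Finset.le_inf' _ _ (fun i _ => Finset.sum_nonneg fun j _ => (hA i j).le)
      have h1 : t₀ ≤ ∑ j, A i j := by
        calc t₀ ≤ Finset.univ.inf' Finset.univ_nonempty (fun i => ∑ j, A i j) := by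
              rw [ht₀]
              apply div_le_self hinf0
              exact_mod_cast hn
          _ ≤ ∑ j, A i j := Finset.inf'_le _ (Finset.mem_univ i)
      have h2 : ∑ j, A i j * (n:ℝ)⁻¹ = (∑ j, A i j) * (n:ℝ)⁻¹ :=
        (Finset.sum_mul _ _ _).symm
      rw [h2]
      exact mul_le_mul_of_nonneg_right h1 (by positivity)
  -- bound
  have hbound : ∀ t ∈ T, t ≤ M := by
    rintro t ⟨ht0, v, ⟨hv0, hv1⟩, hle⟩
    have hv1' : ∀ j, v j ≤ 1 := by
      intro j
      rw [← hv1]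
      exact Finset.single_le_sum (fun k _ => hv0 k) (Finset.mem_univ j)
    calc t = ∑ i, t * v i := by rw [← Finset.mul_sum, hv1, mul_one]
      _ ≤ ∑ i, A.mulVec v i := Finset.sum_le_sum (fun i _ => hle i)
      _ ≤ M := by
          rw [hM]
          apply Finset.sum_le_sum
          intro i _
          rw [Matrix.mulVec, dotProduct]
          apply Finset.sum_le_sum
          intro j _
          calc A i j * v j ≤ A i j * 1 := by
                have := (hA i j).le; gcongr; exact hv1' j
            _ = A i j := mul_one _
  have hbdd : BddAbove T := ⟨M, hbound⟩
  -- compactness: T is the image of a compact set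
  set C : Set (ℝ × (Fin n → ℝ)) :=
    (Set.Icc (0:ℝ) M ×ˢ S) ∩ ⋂ i, {p | p.1 * p.2 i ≤ A.mulVec p.2 i} with hC
  have hCcomp : IsCompact C := by
    apply ((isCompact_Icc).prod (isCompact_stdSimplex _ _)).inter_right
    apply isClosed_iInter
    intro i
    apply isClosed_le
    · exact continuous_fst.mul ((continuous_apply i).comp continuous_snd)
    · have : Continuous fun p : ℝ × (Fin n → ℝ) => A.mulVec p.2 i := by
        simp only [Matrix.mulVec, dotProduct]
        exact continuous_finset_sum _ fun j _ =>
          (continuous_const.mul ((continuous_apply j).comp continuous_snd))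
      exact this
  have hTC : T = Prod.fst '' C := by
    ext t
    constructor
    · rintro ⟨ht0, v, hvS, hle⟩
      exact ⟨(t, v), ⟨⟨⟨ht0, hbound t ⟨ht0, v, hvS, hle⟩⟩, hvS⟩,
        Set.mem_iInter.2 fun i => hle i⟩, rfl⟩
    · rintro ⟨⟨t', v⟩, ⟨⟨⟨ht0, _⟩, hvS⟩, hle⟩, rfl⟩
      exact ⟨ht0, v, hvS, fun i => Set.mem_iInter.1 hle i⟩
  have hTcomp : IsCompact T := hTC ▸ hCcomp.image continuous_fst
  have hTne : T.Nonempty := ⟨t₀, ht₀T⟩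
  set r : ℝ := sSup T with hr
  have hrT : r ∈ T := hTcomp.sSup_mem hTne
  have hrpos : 0 < r := lt_of_lt_of_le ht₀pos (le_csSup hbdd ht₀T)
  obtain ⟨-, v, ⟨hv0, hv1⟩, hle⟩ := hrT
  -- w := A v is strictly positive
  set w : Fin n → ℝ := A.mulVec v with hw
  have hvne : ∃ j, 0 < v j := by
    by_contra h
    push_neg at h
    have : ∑ j, v j = 0 := le_antisymm (Finset.sum_nonpos fun j _ => h j)
      (Finset.sum_nonneg fun j _ => hv0 j)
    rw [hv1] at this; norm_num at this
  have hwpos : ∀ i, 0 < w i := by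
    intro i
    obtain ⟨j, hj⟩ := hvne
    rw [hw, Matrix.mulVec, dotProduct]
    apply Finset.sum_pos' (fun k _ => mul_nonneg (hA i k).le (hv0 k))
    exact ⟨j, Finset.mem_univ j, mul_pos (hA i j) hj⟩
  -- key: A v = r v
  have heq : ∀ i, A.mulVec v i = r * v i := by
    by_contra h
    push_neg at h
    obtain ⟨i₀, hi₀⟩ := h
    have hi₀' : r * v i₀ < w i₀ := lt_of_le_of_ne (hle i₀) (Ne.symm hi₀)
    have h2 : ∀ i, r * w i < A.mulVec w i := by
      intro i
      have e1 : r * w i = ∑ j, A i j * (r * v j) := by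
        rw [hw, Matrix.mulVec, dotProduct, Finset.mul_sum]
        apply Finset.sum_congr rfl
        intro j _; ring
      rw [e1, Matrix.mulVec, dotProduct]
      apply Finset.sum_lt_sum
      · intro j _
        exact mul_le_mul_of_nonneg_left (hle j) (hA i j).le
      · exact ⟨i₀, Finset.mem_univ i₀, by
          exact mul_lt_mul_of_pos_left hi₀' (hA i i₀)⟩
    set t' : ℝ := Finset.univ.inf' Finset.univ_nonempty
      (fun i => A.mulVec w i / w i) with ht'
    have hrt' : r < t' := by
      rw [ht', Finset.lt_inf'_iff]
      intro i _
      rw [lt_div_iff₀ (hwpos i)]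
      exact h2 i
    have ht'T : t' ∈ T := by
      have hsw : 0 < ∑ j, w j := Finset.sum_pos (fun j _ => hwpos j) Finset.univ_nonempty
      set c : ℝ := (∑ j, w j)⁻¹ with hc
      have hcpos : 0 < c := inv_pos.2 hsw
      refine ⟨(hrpos.trans hrt').le, c • w,
        ⟨fun i => (mul_pos hcpos (hwpos i)).le, ?_⟩, ?_⟩
      · simp only [Pi.smul_apply, smul_eq_mul, ← Finset.mul_sum, hc]
        exact inv_mul_cancel₀ hsw.ne'
      · intro i
        rw [Matrix.mulVec_smul]
        simp only [Pi.smul_apply, smul_eq_mul]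
        rw [mul_left_comm]
        apply mul_le_mul_of_nonneg_left _ hcpos.le
        rw [← le_div_iff₀ (hwpos i)]
        exact Finset.inf'_le _ (Finset.mem_univ i)
    exact absurd (le_csSup hbdd ht'T) (not_le.2 hrt')
  refine ⟨r, v, hrpos, ?_, ?_⟩
  · intro i
    have hpos : 0 < r * v i := heq i ▸ hwpos i
    rcases (hv0 i).lt_or_eq with h | h
    · exact h
    · exfalso; rw [← h, mul_zero] at hpos; exact lt_irrefl 0 hpos
  · funext i
    rw [heq i]; simp
end

section
/- Perron's theorem (dominance): Let A be an n×n matrix of real numbers all of whose entries are strictly positive, let r > 0 be a real number and v ∈ ℝⁿ a vector with all entries strictly positive such that A·v = r·v. Then every complex eigenvalue μ of A (viewing A as a complex matrix) with μ ≠ r satisfies |μ| < r. -/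
open Finset

/-- Perron's theorem (dominance): if a real matrix with strictly positive entries
has a positive eigenvalue `r` with a strictly positive eigenvector, then every
complex eigenvalue `μ ≠ r` satisfies `|μ| < r`. -/
theorem perron_dominance (n : ℕ) (A : Matrix (Fin n) (Fin n) ℝ)
    (hA : ∀ i j, 0 < A i j) (r : ℝ) (hr : 0 < r) (v : Fin n → ℝ)
    (hv : ∀ i, 0 < v i) (hAv : A.mulVec v = r • v) (μ : ℂ)
    (hμ : ∃ w : Fin n → ℂ, w ≠ 0 ∧ (A.map (Complex.ofReal)).mulVec w = μ • w)
    (hne : μ ≠ (r : ℂ)) :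
    ‖μ‖ < r := by
  obtain ⟨w, hw0, hw⟩ := hμ
  obtain ⟨i₁, hi₁⟩ := Function.ne_iff.mp hw0
  have hi₁' : w i₁ ≠ 0 := hi₁
  set u : Fin n → ℝ := fun i => ‖w i‖ with hu
  have hμrow : ∀ i, μ * w i = ∑ j, (A i j : ℂ) * w j := by
    intro i
    have := congrFun hw i
    simp only [Matrix.mulVec, dotProduct, Matrix.map_apply, Pi.smul_apply,
      smul_eq_mul] at this
    exact this.symm
  have hAvi : ∀ i, ∑ j, A i j * v j = r * v i := by
    intro i
    have := congrFun hAv i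
    simp only [Matrix.mulVec, dotProduct, Pi.smul_apply, smul_eq_mul] at this
    exact this
  have h1 : ∀ i, ‖μ‖ * u i ≤ ∑ j, A i j * u j := by
    intro i
    calc ‖μ‖ * u i = ‖∑ j, (A i j : ℂ) * w j‖ := by
          rw [← hμrow, norm_mul]
      _ ≤ ∑ j, ‖(A i j : ℂ) * w j‖ := norm_sum_le _ _
      _ = ∑ j, A i j * u j := by
          refine Finset.sum_congr rfl fun j _ => ?_
          rw [norm_mul, Complex.norm_real, Real.norm_of_nonneg (hA i j).le]
  obtain ⟨i₀, -, hi₀⟩ := Finset.exists_max_image univ (fun i => u i / v i) ⟨i₁, mem_univ i₁⟩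
  set c : ℝ := u i₀ / v i₀ with hc
  have hcv : ∀ j, u j ≤ c * v j := fun j => (div_le_iff₀ (hv j)).mp (hi₀ j (mem_univ j))
  have hui₀ : u i₀ = c * v i₀ := (div_mul_cancel₀ _ (hv i₀).ne').symm
  have hu₁pos : 0 < u i₁ := by
    simpa [hu] using (norm_pos_iff.mpr hi₁')
  have hc0 : 0 < c := lt_of_lt_of_le (div_pos hu₁pos (hv i₁)) (hi₀ i₁ (mem_univ i₁))
  have hui₀pos : 0 < u i₀ := hui₀ ▸ mul_pos hc0 (hv i₀)
  have h2 : ∑ j, A i₀ j * u j ≤ r * u i₀ := by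
    calc ∑ j, A i₀ j * u j ≤ ∑ j, A i₀ j * (c * v j) :=
          Finset.sum_le_sum fun j _ => mul_le_mul_of_nonneg_left (hcv j) (hA i₀ j).le
      _ = c * ∑ j, A i₀ j * v j := by rw [Finset.mul_sum]; exact sum_congr rfl fun j _ => by ring
      _ = c * (r * v i₀) := by rw [hAvi]
      _ = r * u i₀ := by rw [hui₀]; ring
  have hle : ‖μ‖ ≤ r := le_of_mul_le_mul_right ((h1 i₀).trans h2) hui₀pos
  by_contra hlt
  have habs : ‖μ‖ = r := le_antisymm hle (not_lt.mp hlt)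
  have heq : ∑ j, A i₀ j * u j = r * u i₀ := le_antisymm h2 (habs ▸ h1 i₀)
  -- termwise equality forces u = c • v
  have hterm : ∀ j ∈ univ, A i₀ j * u j = A i₀ j * (c * v j) := by
    refine (Finset.sum_eq_sum_iff_of_le (fun j _ =>
      mul_le_mul_of_nonneg_left (hcv j) (hA i₀ j).le)).mp ?_
    calc ∑ j, A i₀ j * u j = r * u i₀ := heq
      _ = c * (r * v i₀) := by rw [hui₀]; ring
      _ = c * ∑ j, A i₀ j * v j := by rw [hAvi]
      _ = ∑ j, A i₀ j * (c * v j) := by rw [Finset.mul_sum]; exact sum_congr rfl fun j _ => by ring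
  have hucv : ∀ j, u j = c * v j := fun j =>
    mul_left_cancel₀ (hA i₀ j).ne' (hterm j (mem_univ j))
  have hupos : ∀ j, 0 < u j := fun j => (hucv j) ▸ mul_pos hc0 (hv j)
  -- triangle-inequality equality case
  set S : ℂ := μ * w i₀ with hS
  set t : ℝ := r * u i₀ with ht
  have ht0 : 0 < t := mul_pos hr hui₀pos
  have habsS : ‖S‖ = t := by
    rw [hS, norm_mul, habs]
  set d : ℂ := S / (t : ℂ) with hd
  have hd1 : ‖d‖ = 1 := by
    rw [hd, norm_div, habsS, Complex.norm_real, Real.norm_of_nonneg ht0.le, div_self ht0.ne']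
  have hdS : (starRingEnd ℂ) d * S = (t : ℂ) := by
    have h1 : (starRingEnd ℂ) S * S = ((t ^ 2 : ℝ) : ℂ) := by
      rw [mul_comm, Complex.mul_conj]
      norm_cast
      rw [← Complex.sq_norm, habsS]
    have ht0' : (t : ℂ) ≠ 0 := by exact_mod_cast ht0.ne'
    rw [hd, map_div₀, Complex.conj_ofReal, div_mul_eq_mul_div, h1]
    push_cast
    rw [sq, mul_div_assoc, div_self ht0', mul_one]
  have hre : ∀ j ∈ univ, A i₀ j * ((starRingEnd ℂ) d * w j).re = A i₀ j * u j := by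
    refine (Finset.sum_eq_sum_iff_of_le (fun j _ => ?_)).mp ?_
    · refine mul_le_mul_of_nonneg_left ?_ (hA i₀ j).le
      calc ((starRingEnd ℂ) d * w j).re ≤ ‖(starRingEnd ℂ) d * w j‖ :=
            Complex.re_le_norm _
        _ = u j := by rw [norm_mul, Complex.norm_conj, hd1, one_mul]
    · have hexp : ((starRingEnd ℂ) d * S).re = ∑ j, A i₀ j * ((starRingEnd ℂ) d * w j).re := by
        rw [hS, hμrow, Finset.mul_sum, Complex.re_sum]
        refine sum_congr rfl fun j _ => ?_
        rw [mul_left_comm, Complex.re_ofReal_mul]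
      rw [← hexp, hdS, Complex.ofReal_re]
      exact heq.symm
  have hwj : ∀ j, w j = (u j : ℂ) * d := by
    intro j
    have hrej : ((starRingEnd ℂ) d * w j).re = u j :=
      mul_left_cancel₀ (hA i₀ j).ne' (hre j (mem_univ j))
    have habsj : ‖(starRingEnd ℂ) d * w j‖ = u j := by
      rw [norm_mul, Complex.norm_conj, hd1, one_mul]
    have himj : ((starRingEnd ℂ) d * w j).im = 0 := by
      have h1 := Complex.sq_norm ((starRingEnd ℂ) d * w j)
      rw [habsj, Complex.normSq_apply, hrej] at h1
      have h2 : ((starRingEnd ℂ) d * w j).im ^ 2 = 0 := by nlinarith [h1]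
      exact pow_eq_zero_iff two_ne_zero |>.mp h2
    have hz : (starRingEnd ℂ) d * w j = (u j : ℂ) := by
      apply Complex.ext <;> simp [hrej, himj]
    have hdd : d * (starRingEnd ℂ) d = 1 := by
      rw [Complex.mul_conj]
      norm_cast
      rw [← Complex.sq_norm, hd1, one_pow]
    calc w j = (d * (starRingEnd ℂ) d) * w j := by rw [hdd, one_mul]
      _ = d * ((starRingEnd ℂ) d * w j) := by ring
      _ = (u j : ℂ) * d := by rw [hz]; ring
  have hwi₀ : w i₀ ≠ 0 := by
    rw [hwj i₀]
    exact mul_ne_zero (by exact_mod_cast (hupos i₀).ne') (by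
      intro h; rw [h] at hd1; simp at hd1)
  have hfinal : μ * w i₀ = (r : ℂ) * w i₀ := by
    rw [hμrow]
    calc ∑ j, (A i₀ j : ℂ) * w j = ∑ j, ((A i₀ j * u j : ℝ) : ℂ) * d := by
          refine sum_congr rfl fun j _ => ?_
          rw [hwj j]; push_cast; ring
      _ = ((∑ j, A i₀ j * u j : ℝ) : ℂ) * d := by rw [← Finset.sum_mul]; norm_cast
      _ = ((r * u i₀ : ℝ) : ℂ) * d := by rw [heq]
      _ = (r : ℂ) * w i₀ := by rw [hwj i₀]; push_cast; ring
  exact hne (mul_right_cancel₀ hwi₀ hfinal)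
end

section
/- Perron's theorem (uniqueness up to scaling): Let A be an n×n matrix of real numbers all of whose entries are strictly positive, and suppose v, w ∈ ℝⁿ are vectors, each with all entries nonnegative and not all zero, satisfying A·v = r·v and A·w = s·w for real numbers r, s. Then r = s and w is a scalar multiple of v. -/
/-!
Let `v` be a positive eigenvector of `A` (nonnegative and nonzero forces positive, since `A`
has positive entries) and `w` a nonnegative one. Take the largest `c` with `c • v ≤ w`; then
`u = w - c • v` is nonnegative with a zero coordinate `i₀`, and `(A *ᵥ u) i₀ = (s - r) * w i₀`.
Either `u = 0`, so `w = c • v`, or `A *ᵥ u` is positive everywhere, which forces `r < s`.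
Swapping the roles of `v` and `w` gives `r = s`, and then only the first alternative remains.
-/

theorem exists_smul_le_and_apply_eq {ι R : Type*} [Finite ι] [Nonempty ι] [Field R]
    [LinearOrder R] [IsStrictOrderedRing R] {v w : ι → R} (hv : ∀ i, 0 < v i) :
    ∃ c : R, c • v ≤ w ∧ ∃ i₀, w i₀ = c * v i₀ := by
  obtain ⟨i₀, hi₀⟩ := Finite.exists_min fun i => w i / v i
  exact ⟨w i₀ / v i₀, fun j => (le_div_iff₀ (hv j)).mp (hi₀ j),
    i₀, (div_mul_cancel₀ _ (hv i₀).ne').symm⟩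

namespace Matrix

variable {ι R : Type*} [Fintype ι] [Field R] {A : Matrix ι ι R}

theorem eigenvalue_eq_of_mulVec_eq_smul {x : ι → R} {r s : R} (hx0 : x ≠ 0)
    (hr : A *ᵥ x = r • x) (hs : A *ᵥ x = s • x) : r = s :=
  smul_left_injective R hx0 (hr.symm.trans hs)

variable [LinearOrder R] [IsStrictOrderedRing R]

theorem mulVec_pos_of_nonneg_of_ne_zero {x : ι → R} (hA : ∀ i j, 0 < A i j) (hx : 0 ≤ x)
    (hx0 : x ≠ 0) (i : ι) : 0 < (A *ᵥ x) i := by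
  obtain ⟨j, hj⟩ := Function.ne_iff.mp hx0
  exact Finset.sum_pos' (fun k _ => mul_nonneg (hA i k).le (hx k))
    ⟨j, Finset.mem_univ j, mul_pos (hA i j) (lt_of_le_of_ne (hx j) (Ne.symm hj))⟩

theorem pos_of_mulVec_eq_smul {x : ι → R} {r : R} (hA : ∀ i j, 0 < A i j) (hx : 0 ≤ x)
    (hx0 : x ≠ 0) (hAx : A *ᵥ x = r • x) (i : ι) : 0 < x i := by
  have hri : 0 < r * x i := by simpa [hAx] using mulVec_pos_of_nonneg_of_ne_zero hA hx hx0 i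
  exact lt_of_le_of_ne (hx i) fun h => hri.ne' (by rw [← h, mul_zero])

theorem lt_or_eq_smul_of_mulVec_eq_smul {v w : ι → R} {r s : R} (hA : ∀ i j, 0 < A i j)
    (hv : ∀ i, 0 < v i) (hw : 0 ≤ w) (hAv : A *ᵥ v = r • v) (hAw : A *ᵥ w = s • w) :
    r < s ∨ ∃ c : R, w = c • v := by
  rcases isEmpty_or_nonempty ι with hι | hι
  · exact Or.inr ⟨0, Subsingleton.elim _ _⟩
  obtain ⟨c, hcw, i₀, hi₀⟩ := exists_smul_le_and_apply_eq (w := w) hv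
  have hAu : (A *ᵥ (w - c • v)) i₀ = (s - r) * w i₀ := by
    simp only [mulVec_sub, mulVec_smul, hAv, hAw, Pi.sub_apply, Pi.smul_apply, smul_eq_mul]
    rw [hi₀]
    ring
  by_cases hu : w - c • v = 0
  · exact Or.inr ⟨c, sub_eq_zero.mp hu⟩
  · have hpos := hAu ▸ mulVec_pos_of_nonneg_of_ne_zero hA (sub_nonneg.mpr hcw) hu i₀
    exact Or.inl (sub_pos.mp (pos_of_mul_pos_left hpos (hw i₀)))

theorem eigenvalue_le_of_mulVec_eq_smul {v w : ι → R} {r s : R} (hA : ∀ i j, 0 < A i j)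
    (hv : ∀ i, 0 < v i) (hw : 0 ≤ w) (hw0 : w ≠ 0) (hAv : A *ᵥ v = r • v)
    (hAw : A *ᵥ w = s • w) : r ≤ s := by
  obtain hrs | ⟨c, rfl⟩ := lt_or_eq_smul_of_mulVec_eq_smul hA hv hw hAv hAw
  · exact hrs.le
  · refine (eigenvalue_eq_of_mulVec_eq_smul hw0 ?_ hAw).le
    rw [mulVec_smul, hAv, smul_comm]

end Matrix

/-- Perron's theorem (uniqueness up to scaling): any two nonnegative nonzero
eigenvectors of a strictly positive real matrix have the same eigenvalue and
are scalar multiples of each other. -/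
theorem perron_uniqueness (n : ℕ) (A : Matrix (Fin n) (Fin n) ℝ)
    (hA : ∀ i j, 0 < A i j) (v w : Fin n → ℝ) (r s : ℝ)
    (hv0 : ∀ i, 0 ≤ v i) (hvne : v ≠ 0)
    (hw0 : ∀ i, 0 ≤ w i) (hwne : w ≠ 0)
    (hAv : A.mulVec v = r • v) (hAw : A.mulVec w = s • w) :
    r = s ∧ ∃ c : ℝ, w = c • v := by
  have hv := Matrix.pos_of_mulVec_eq_smul hA hv0 hvne hAv
  have hw := Matrix.pos_of_mulVec_eq_smul hA hw0 hwne hAw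
  have hrs : r = s :=
    le_antisymm (Matrix.eigenvalue_le_of_mulVec_eq_smul hA hv hw0 hwne hAv hAw)
      (Matrix.eigenvalue_le_of_mulVec_eq_smul hA hw hv0 hvne hAw hAv)
  subst hrs
  exact ⟨rfl,
    (Matrix.lt_or_eq_smul_of_mulVec_eq_smul hA hv hw0 hAv hAw).resolve_left (lt_irrefl r)⟩
end

section
/- Perron theorem for positive stochastic matrices: let G be an n×n real matrix with all entries strictly positive and each column summing to 1. Then there exists a vector v ∈ ℝⁿ with all entries strictly positive such that G·v = v; any two nonnegative nonzero vectors v, w with G·v = v and G·w = w are scalar multiples of each other; and every complex eigenvalue μ of G with μ ≠ 1 satisfies |μ| < 1. -/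
lemma re_eq_abs_imp (z : ℂ) (h : z.re = ‖z‖) : z = (‖z‖ : ℂ) := by
  have h2 : z.re ^ 2 + z.im ^ 2 = ‖z‖ ^ 2 := by
    rw [Complex.sq_norm, Complex.normSq_apply]; ring
  have h3 : ‖z‖ ^ 2 = z.re ^ 2 := by rw [← h]
  have him : z.im = 0 := by
    have : z.im ^ 2 = 0 := by linarith
    exact pow_eq_zero_iff (by norm_num) |>.1 this
  exact Complex.ext (by simp [h]) (by simp [him])

section
variable {n : ℕ} {G : Matrix (Fin n) (Fin n) ℝ}

lemma sum_mulVec_eq' (hGcol : ∀ j, ∑ i, G i j = 1) (u : Fin n → ℝ) :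
    ∑ i, G.mulVec u i = ∑ j, u j := by
  simp only [Matrix.mulVec, dotProduct]
  rw [Finset.sum_comm]
  simp [← Finset.sum_mul, hGcol]

lemma fixed_of_le' (hGcol : ∀ j, ∑ i, G i j = 1) (u : Fin n → ℝ)
    (h : ∀ i, u i ≤ G.mulVec u i) : G.mulVec u = u := by
  have hsum : ∑ i, (G.mulVec u i - u i) = 0 := by
    rw [Finset.sum_sub_distrib, sum_mulVec_eq' hGcol, sub_self]
  have := (Finset.sum_eq_zero_iff_of_nonneg (fun i _ => sub_nonneg.2 (h i))).1 hsum
  funext i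
  have hi := this i (Finset.mem_univ i)
  linarith [hi]

lemma eig_lt' (hG0 : ∀ i j, 0 < G i j) (hGcol : ∀ j, ∑ i, G i j = 1)
    (μ : ℂ) (w : Fin n → ℂ) (hwne : w ≠ 0)
    (heig : (G.map (Complex.ofReal)).mulVec w = μ • w) (hμ : μ ≠ 1) :
    ‖μ‖ < 1 := by
  set u : Fin n → ℝ := fun j => ‖(w j)‖ with hu
  obtain ⟨i0, hi0⟩ := Function.ne_iff.1 hwne
  have hwi0 : w i0 ≠ 0 := hi0
  have hentry : ∀ i, (G.map (Complex.ofReal)).mulVec w i = ∑ j, (G i j : ℂ) * w j := by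
    intro i; simp [Matrix.mulVec, dotProduct, Matrix.map_apply]
  have habsterm : ∀ i j, ‖((G i j : ℂ) * w j)‖ = G i j * u j := by
    intro i j
    rw [norm_mul, Complex.norm_real, Real.norm_eq_abs, abs_of_pos (hG0 i j)]
  have htri : ∀ i, ‖μ‖ * u i ≤ G.mulVec u i := by
    intro i
    have h1 : ‖μ‖ * u i = ‖((G.map (Complex.ofReal)).mulVec w i)‖ := by
      rw [heig]; simp [hu, Pi.smul_apply, norm_mul]
    rw [h1, hentry i]
    refine le_trans (norm_sum_le _ _) ?_
    rw [Matrix.mulVec, dotProduct]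
    exact le_of_eq (Finset.sum_congr rfl fun j _ => habsterm i j)
  have husum : 0 < ∑ j, u j := by
    have : 0 < u i0 := by simpa [hu] using (norm_pos_iff.mpr hwi0)
    refine Finset.sum_pos' (fun j _ => norm_nonneg _) ⟨i0, Finset.mem_univ _, this⟩
  have hle : ‖μ‖ ≤ 1 := by
    by_contra hgt
    push_neg at hgt
    have h1 : ‖μ‖ * ∑ j, u j ≤ ∑ i, G.mulVec u i := by
      rw [Finset.mul_sum]
      exact Finset.sum_le_sum fun i _ => htri i
    rw [sum_mulVec_eq' hGcol] at h1
    nlinarith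
  rcases lt_or_eq_of_le hle with h | habs1
  · exact h
  exfalso
  -- abs μ = 1
  have htri' : ∀ i, u i ≤ G.mulVec u i := fun i => by
    have := htri i; rwa [habs1, one_mul] at this
  have hufix : G.mulVec u = u := fixed_of_le' hGcol u htri'
  obtain ⟨S, hS⟩ : ∃ S : ℂ, S = μ * w i0 := ⟨_, rfl⟩
  have hSabs : ‖S‖ = u i0 := by
    rw [hS, norm_mul, habs1, one_mul]
  have hSne : S ≠ 0 := by
    intro h
    rw [h] at hSabs
    exact (norm_pos_iff.mpr hwi0).ne' (by simpa [hu] using hSabs.symm)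
  have hSsum : S = ∑ j, (G i0 j : ℂ) * w j := by
    rw [hS, ← hentry i0, heig]; simp
  have heq : ‖S‖ = ∑ j, ‖((G i0 j : ℂ) * w j)‖ := by
    rw [hSabs]
    calc u i0 = G.mulVec u i0 := by rw [hufix]
      _ = ∑ j, G i0 j * u j := rfl
      _ = ∑ j, ‖((G i0 j : ℂ) * w j)‖ := by
          exact (Finset.sum_congr rfl fun j _ => (habsterm i0 j).symm)
  -- termwise equality of Re with abs
  have hterm : ∀ j, ((starRingEnd ℂ) S * ((G i0 j : ℂ) * w j)).re
      = ‖S‖ * ‖((G i0 j : ℂ) * w j)‖ := by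
    have hsum0 : ∑ j, (‖S‖ * ‖((G i0 j : ℂ) * w j)‖
        - ((starRingEnd ℂ) S * ((G i0 j : ℂ) * w j)).re) = 0 := by
      rw [Finset.sum_sub_distrib, ← Finset.mul_sum, ← heq]
      have h1 : ∑ j, ((starRingEnd ℂ) S * ((G i0 j : ℂ) * w j)).re
          = ((starRingEnd ℂ) S * S).re := by
        rw [← Complex.re_sum, ← Finset.mul_sum, ← hSsum]
      have h2 : (starRingEnd ℂ) S * S = ((‖S‖ ^ 2 : ℝ) : ℂ) := by
        rw [mul_comm, Complex.mul_conj, Complex.normSq_eq_norm_sq]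
      rw [h1, h2, Complex.ofReal_re]
      ring
    have hnn : ∀ j ∈ Finset.univ, 0 ≤ ‖S‖ * ‖((G i0 j : ℂ) * w j)‖
        - ((starRingEnd ℂ) S * ((G i0 j : ℂ) * w j)).re := by
      intro j _
      have h1 : ((starRingEnd ℂ) S * ((G i0 j : ℂ) * w j)).re
          ≤ ‖S‖ * ‖((G i0 j : ℂ) * w j)‖ := by
        calc ((starRingEnd ℂ) S * ((G i0 j : ℂ) * w j)).re
            ≤ ‖((starRingEnd ℂ) S * ((G i0 j : ℂ) * w j))‖ := Complex.re_le_norm _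
          _ = ‖((starRingEnd ℂ) S)‖ * ‖((G i0 j : ℂ) * w j)‖ :=
              norm_mul _ _
          _ = ‖S‖ * ‖((G i0 j : ℂ) * w j)‖ := by
              rw [Complex.norm_conj]
      linarith
    have := (Finset.sum_eq_zero_iff_of_nonneg hnn).1 hsum0
    intro j
    have hj := this j (Finset.mem_univ j)
    linarith
  -- so conj S * c_j is the nonneg real abs S * abs c_j
  have hreal : ∀ j, (starRingEnd ℂ) S * ((G i0 j : ℂ) * w j)
      = ((‖S‖ * ‖((G i0 j : ℂ) * w j)‖ : ℝ) : ℂ) := by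
    intro j
    have habseq : ‖((starRingEnd ℂ) S * ((G i0 j : ℂ) * w j))‖
        = ‖S‖ * ‖((G i0 j : ℂ) * w j)‖ := by
      rw [norm_mul, Complex.norm_conj]
    have h1 := re_eq_abs_imp ((starRingEnd ℂ) S * ((G i0 j : ℂ) * w j)) (by
      rw [hterm j, habseq])
    rw [h1, habseq]
  have h4 : ((‖S‖ : ℂ)) ≠ 0 := by
    simpa using norm_ne_zero_iff.mpr hSne
  -- key: abs S * w j = u j * S
  have key : ∀ j, (‖S‖ : ℂ) * w j = (u j : ℂ) * S := by
    intro j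
    have h5 : ((G i0 j : ℂ)) ≠ 0 := by
      simpa using (hG0 i0 j).ne'
    have h2 : S * ((starRingEnd ℂ) S * ((G i0 j : ℂ) * w j))
        = S * ((‖S‖ * ‖((G i0 j : ℂ) * w j)‖ : ℝ) : ℂ) := by
      rw [hreal j]
    have h3 : S * (starRingEnd ℂ) S = ((‖S‖ ^ 2 : ℝ) : ℂ) := by
      rw [Complex.mul_conj, Complex.normSq_eq_norm_sq]
    rw [← mul_assoc, h3, habsterm i0 j] at h2
    have h7 : (‖S‖ : ℂ) * ((G i0 j : ℂ) * ((‖S‖ : ℂ) * w j))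
        = (‖S‖ : ℂ) * ((G i0 j : ℂ) * ((u j : ℂ) * S)) := by
      push_cast at h2
      linear_combination h2
    exact mul_left_cancel₀ h5 (mul_left_cancel₀ h4 h7)
  -- conclude μ = 1
  have hmain : (‖S‖ : ℂ) * (μ * w i0) = (‖S‖ : ℂ) * w i0 := by
    have h1 : (‖S‖ : ℂ) * (μ * w i0)
        = (‖S‖ : ℂ) * ((G.map (Complex.ofReal)).mulVec w i0) := by
      rw [heig]; simp
    rw [h1, hentry i0, Finset.mul_sum]
    have h2 : ∀ j ∈ Finset.univ, (‖S‖ : ℂ) * ((G i0 j : ℂ) * w j)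
        = (G i0 j : ℂ) * ((u j : ℂ) * S) := by
      intro j _
      rw [← mul_assoc, mul_comm (‖S‖ : ℂ) ((G i0 j : ℂ)), mul_assoc, key j]
    rw [Finset.sum_congr rfl h2]
    have h3 : ∑ j, (G i0 j : ℂ) * ((u j : ℂ) * S) = ((G.mulVec u i0 : ℝ) : ℂ) * S := by
      have h4' : ((G.mulVec u i0 : ℝ) : ℂ) = ∑ j, ((G i0 j * u j : ℝ) : ℂ) := by
        rw [Matrix.mulVec, dotProduct]
        push_cast
        rfl
      rw [h4', Finset.sum_mul]
      exact Finset.sum_congr rfl fun j _ => by push_cast; ring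
    rw [h3, hufix, ← key i0]
  have h5 : μ * w i0 = w i0 := mul_left_cancel₀ h4 hmain
  exact hμ (mul_right_cancel₀ hwi0 (by rw [h5, one_mul] : μ * w i0 = 1 * w i0))


lemma exists_fixed' (hn : 0 < n) (hG0 : ∀ i j, 0 < G i j) (hGcol : ∀ j, ∑ i, G i j = 1) :
    ∃ v : Fin n → ℝ, v ≠ 0 ∧ G.mulVec v = v := by
  have hones : (G - 1).transpose.mulVec (fun _ => (1:ℝ)) = 0 := by
    funext i
    simp [Matrix.mulVec, dotProduct, Matrix.transpose_apply, Matrix.sub_apply,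
      Finset.sum_sub_distrib, hGcol i, Matrix.one_apply]
  have hdet : (G - 1).transpose.det = 0 :=
    Matrix.exists_mulVec_eq_zero_iff.1 ⟨fun _ => 1, by
      intro h
      have := congrFun h ⟨0, hn⟩
      simp at this, hones⟩
  have hdet2 : (G - 1).det = 0 := by rwa [Matrix.det_transpose] at hdet
  obtain ⟨v, hvne, hv⟩ := Matrix.exists_mulVec_eq_zero_iff.2 hdet2
  refine ⟨v, hvne, ?_⟩
  have := hv
  rw [Matrix.sub_mulVec, Matrix.one_mulVec, sub_eq_zero] at this
  exact this

lemma pos_of_fixed' (hG0 : ∀ i j, 0 < G i j) (v : Fin n → ℝ)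
    (hv0 : ∀ i, 0 ≤ v i) (hvne : v ≠ 0) (hfix : G.mulVec v = v) : ∀ i, 0 < v i := by
  obtain ⟨j0, hj0⟩ := Function.ne_iff.1 hvne
  have hj0' : 0 < v j0 := lt_of_le_of_ne (hv0 j0) (Ne.symm hj0)
  intro i
  have : G i j0 * v j0 ≤ ∑ j, G i j * v j :=
    Finset.single_le_sum (fun j _ => mul_nonneg (hG0 i j).le (hv0 j)) (Finset.mem_univ j0)
  have h2 : 0 < ∑ j, G i j * v j := lt_of_lt_of_le (mul_pos (hG0 i j0) hj0') this
  calc (0:ℝ) < ∑ j, G i j * v j := h2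
    _ = G.mulVec v i := rfl
    _ = v i := by rw [hfix]


lemma unique_fixed' (hG0 : ∀ i j, 0 < G i j)
    (v w : Fin n → ℝ) (hv0 : ∀ i, 0 ≤ v i) (hvne : v ≠ 0) (hw0 : ∀ i, 0 ≤ w i)
    (hwne : w ≠ 0) (hv : G.mulVec v = v) (hw : G.mulVec w = w) : ∃ c : ℝ, w = c • v := by
  have hvpos := pos_of_fixed' hG0 v hv0 hvne hv
  have hwpos := pos_of_fixed' hG0 w hw0 hwne hw
  have hne : (Finset.univ : Finset (Fin n)).Nonempty := by
    rcases Nat.eq_zero_or_pos n with h | h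
    · subst h; exact absurd (funext fun i => i.elim0) hvne
    · exact ⟨⟨0, h⟩, Finset.mem_univ _⟩
  set c : ℝ := Finset.univ.inf' hne (fun i => w i / v i) with hc
  obtain ⟨i0, _, hi0⟩ := Finset.exists_mem_eq_inf' hne (fun i => w i / v i)
  set u : Fin n → ℝ := w - c • v with hu
  have hufix : G.mulVec u = u := by
    rw [hu, Matrix.mulVec_sub, Matrix.mulVec_smul, hv, hw]
  have hu0 : ∀ i, 0 ≤ u i := by
    intro i
    have hle : c ≤ w i / v i := Finset.inf'_le _ (Finset.mem_univ i)
    have := (le_div_iff₀ (hvpos i)).1 hle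
    simp [hu]
    linarith
  have hui0 : u i0 = 0 := by
    have : c = w i0 / v i0 := hi0
    simp [hu, this, div_mul_cancel₀ _ (hvpos i0).ne']
  by_cases hcase : u = 0
  · exact ⟨c, by rw [← sub_eq_zero]; exact hcase⟩
  · exact absurd hui0 (pos_of_fixed' hG0 u hu0 hcase hufix i0).ne'

lemma abs_fixed' (hG0 : ∀ i j, 0 < G i j) (hGcol : ∀ j, ∑ i, G i j = 1)
    (v : Fin n → ℝ) (hfix : G.mulVec v = v) :
    G.mulVec (fun i => |v i|) = fun i => |v i| := by
  apply fixed_of_le' hGcol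
  intro i
  calc |v i| = |G.mulVec v i| := by rw [hfix]
    _ = |∑ j, G i j * v j| := rfl
    _ ≤ ∑ j, |G i j * v j| := Finset.abs_sum_le_sum_abs _ _
    _ = ∑ j, G i j * |v j| := Finset.sum_congr rfl fun j _ => by
        rw [abs_mul, abs_of_pos (hG0 i j)]
    _ = G.mulVec (fun i => |v i|) i := rfl

end

/-- Perron theorem for positive column-stochastic matrices: there is a strictly
positive vector fixed by `G`; any two nonnegative nonzero fixed vectors are
scalar multiples of each other; and every complex eigenvalue `μ ≠ 1` of `G`
satisfies `|μ| < 1`. -/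
theorem perron_positive_stochastic (n : ℕ)
    (G : Matrix (Fin n) (Fin n) ℝ)
    (hG0 : ∀ i j, 0 < G i j) (hGcol : ∀ j, ∑ i, G i j = 1) :
    (∃ v : Fin n → ℝ, (∀ i, 0 < v i) ∧ G.mulVec v = v) ∧
    (∀ v w : Fin n → ℝ, (∀ i, 0 ≤ v i) → v ≠ 0 → (∀ i, 0 ≤ w i) → w ≠ 0 →
      G.mulVec v = v → G.mulVec w = w → ∃ c : ℝ, w = c • v) ∧
    (∀ μ : ℂ, (∃ w : Fin n → ℂ, w ≠ 0 ∧
        (G.map (Complex.ofReal)).mulVec w = μ • w) →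
      μ ≠ 1 → ‖μ‖ < 1) := by
  refine ⟨?_, ?_, ?_⟩
  · rcases Nat.eq_zero_or_pos n with h | h
    · subst h
      exact ⟨fun _ => 1, fun i => i.elim0, funext fun i => i.elim0⟩
    · obtain ⟨v, hvne, hvfix⟩ := exists_fixed' h hG0 hGcol
      set a : Fin n → ℝ := fun i => |v i| with ha
      have hafix : G.mulVec a = a := abs_fixed' hG0 hGcol v hvfix
      have hane : a ≠ 0 := by
        intro hcon
        apply hvne
        funext i
        have := congrFun hcon i
        simpa [ha, abs_eq_zero] using this
      exact ⟨a, pos_of_fixed' hG0 a (fun i => abs_nonneg _) hane hafix, hafix⟩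
  · exact fun v w hv0 hvne hw0 hwne hv hw =>
      unique_fixed' hG0 v w hv0 hvne hw0 hwne hv hw
  · rintro μ ⟨w, hwne, heig⟩ hμ
    exact eig_lt' hG0 hGcol μ w hwne heig hμ
end

section
/- Power method for positive matrices: let A be an n×n real matrix with all entries strictly positive, let r > 0 and v ∈ ℝⁿ with all entries strictly positive satisfy A·v = r·v, and assume every complex eigenvalue μ ≠ r of A satisfies |μ| < r. Then for the all-ones starting vector 𝟙, the normalized iterates A^k·𝟙 / ‖A^k·𝟙‖ converge as k → ∞ to v/‖v‖. -/
open Filter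

/-- The identification of `Fin n → ℝ` with the Euclidean space `ℝⁿ`
(carrying the Euclidean norm). -/
def toEucR (n : ℕ) (x : Fin n → ℝ) : EuclideanSpace ℝ (Fin n) := WithLp.toLp 2 x
open Filter Finset

lemma aux_pow_ratio {j d : ℕ} (h : j ≤ d) {k : ℝ} (hk : 0 < k) :
    k ^ j / k ^ d = (k⁻¹) ^ (d - j) := by
  obtain ⟨e, rfl⟩ := Nat.exists_eq_add_of_le h
  rw [pow_add, Nat.add_sub_cancel_left, inv_pow]
  field_simp

lemma tendsto_choose_div_choose {j d : ℕ} (h : j < d) :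
    Tendsto (fun k : ℕ => (k.choose j : ℝ) / (k.choose d)) atTop (nhds 0) := by
  have hlim : Tendsto (fun k : ℕ => ((d.factorial : ℝ) * 2 ^ d / j.factorial) * ((k:ℝ)⁻¹) ^ (d - j))
      atTop (nhds 0) := by
    have := (tendsto_inv_atTop_nhds_zero_nat.pow (d - j)).const_mul
      ((d.factorial : ℝ) * 2 ^ d / j.factorial)
    simpa [zero_pow (Nat.sub_ne_zero_of_lt h)] using this
  apply squeeze_zero' ?_ ?_ hlim
  · filter_upwards [eventually_ge_atTop d] with k hk
    positivity
  · filter_upwards [eventually_ge_atTop (2*d)] with k hk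
    have hd0 : 0 < d := by omega
    have hk0 : (0:ℝ) < k := by
      have : 0 < k := lt_of_lt_of_le (Nat.mul_pos two_pos hd0) hk
      exact_mod_cast this
    have h1 : (k.choose j : ℝ) ≤ (k:ℝ) ^ j / j.factorial := Nat.choose_le_pow_div j k
    have h2 : ((k:ℝ)/2) ^ d / d.factorial ≤ (k.choose d : ℝ) := by
      calc ((k:ℝ)/2) ^ d / d.factorial ≤ ((k + 1 - d : ℕ) : ℝ) ^ d / d.factorial := by
            have hcast : ((k + 1 - d : ℕ) : ℝ) = (k:ℝ) + 1 - d := by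
              have : d ≤ k + 1 := by omega
              push_cast [Nat.cast_sub this]
              ring
            have hdk : (d:ℝ) ≤ (k:ℝ)/2 := by
                rw [le_div_iff₀ two_pos]
                have h2d : d * 2 ≤ k := by omega
                exact_mod_cast h2d
            have hle : ((k:ℝ)/2) ^ d ≤ ((k + 1 - d : ℕ) : ℝ) ^ d := by
              apply pow_le_pow_left₀ (by positivity)
              rw [hcast]; linarith
            gcongr
          _ ≤ (k.choose d : ℝ) := Nat.pow_le_choose d k
    have hden : (0:ℝ) < ((k:ℝ)/2) ^ d / d.factorial := by positivity
    calc (k.choose j : ℝ) / (k.choose d) ≤ ((k:ℝ) ^ j / j.factorial) / (((k:ℝ)/2) ^ d / d.factorial) := by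
          apply div_le_div₀ (by positivity) h1 hden h2
      _ = ((d.factorial : ℝ) * 2 ^ d / j.factorial) * ((k:ℝ)⁻¹) ^ (d - j) := by
          rw [← aux_pow_ratio h.le hk0]
          rw [div_pow]
          field_simp

lemma tendsto_choose_mul_pow (j d : ℕ) {q r : ℝ} (hq0 : 0 < q) (hq : q < r) :
    Tendsto (fun k : ℕ => (k.choose j : ℝ) * q ^ k / ((k.choose d : ℝ) * r ^ k))
      atTop (nhds 0) := by
  have hr : 0 < r := hq0.trans hq
  have hqr : q / r < 1 := (div_lt_one hr).mpr hq
  have hqr0 : 0 ≤ q / r := by positivity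
  apply squeeze_zero' ?_ ?_ (tendsto_pow_const_mul_const_pow_of_lt_one j hqr0 hqr)
  · filter_upwards [eventually_ge_atTop d] with k hk
    have : 0 < k.choose d := Nat.choose_pos hk
    positivity
  · filter_upwards [eventually_ge_atTop d] with k hk
    have hcd : (1:ℝ) ≤ (k.choose d : ℝ) := by exact_mod_cast Nat.choose_pos hk
    have hcj : (k.choose j : ℝ) ≤ (k:ℝ) ^ j := by
      refine (Nat.choose_le_pow_div j k).trans ?_
      apply div_le_self (by positivity)
      exact_mod_cast j.factorial_pos
    calc (k.choose j : ℝ) * q ^ k / ((k.choose d : ℝ) * r ^ k)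
        ≤ ((k:ℝ) ^ j * q ^ k) / (1 * r ^ k) := by
          apply div_le_div₀ (by positivity) (by gcongr) (by positivity)
          gcongr
      _ = (k:ℝ) ^ j * (q / r) ^ k := by
          rw [one_mul, div_pow, mul_div_assoc]

variable {V : Type*} [AddCommGroup V] [Module ℂ V]

lemma pow_apply_eq_sum (f : Module.End ℂ V) (μ : ℂ) (x : V) (m : ℕ)
    (hx : ((f - μ • 1) ^ m) x = 0) (k : ℕ) :
    (f ^ k) x
      = ∑ j ∈ Finset.range m, ((k.choose j : ℂ) * μ ^ (k - j)) • (((f - μ • 1) ^ j) x) := by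
  have hc : Commute (f - μ • 1) (μ • (1 : Module.End ℂ V)) := by
    apply Commute.sub_left
    · exact ((Commute.one_right f).smul_right μ)
    · exact Commute.refl _
  set t : ℕ → V := fun j => ((k.choose j : ℂ) * μ ^ (k - j)) • (((f - μ • 1) ^ j) x) with ht
  have step1 : (f ^ k) x = ∑ j ∈ Finset.range (k+1), t j := by
    conv_lhs => rw [← sub_add_cancel f (μ • 1), hc.add_pow]
    rw [LinearMap.coe_sum, Finset.sum_apply]
    refine Finset.sum_congr rfl fun j hj => ?_
    have h1 : (μ • (1 : Module.End ℂ V)) ^ (k - j) = μ ^ (k - j) • 1 := by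
      rw [smul_pow, one_pow]
    rw [h1, ht]
    simp only [Module.End.mul_apply, Module.End.natCast_apply, LinearMap.smul_apply,
      Module.End.one_apply, map_smul, map_nsmul, smul_smul]
    rw [← Nat.cast_smul_eq_nsmul ℂ, smul_smul, mul_comm]
  have ht1 : ∀ j, m ≤ j → t j = 0 := by
    intro j hj
    have : ((f - μ • 1) ^ j) x = 0 := by
      have : (f - μ • 1) ^ j = (f - μ • 1) ^ (j - m) * (f - μ • 1) ^ m := by
        rw [← pow_add]; congr 1; omega
      rw [this, Module.End.mul_apply, hx, map_zero]
    rw [ht]; simp [this]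
  have ht2 : ∀ j, k < j → t j = 0 := by
    intro j hj
    rw [ht]
    simp [Nat.choose_eq_zero_of_lt hj]
  rw [step1]
  calc ∑ j ∈ Finset.range (k+1), t j
      = ∑ j ∈ Finset.range (max (k+1) m), t j :=
        Finset.sum_subset (Finset.range_subset_range.2 (le_max_left (k+1) m))
          (fun j _ hj => ht2 j (by simp at hj; omega))
    _ = ∑ j ∈ Finset.range m, t j :=
        (Finset.sum_subset (Finset.range_subset_range.2 (le_max_right (k+1) m))
          (fun j _ hj => ht1 j (by simp at hj; omega))).symm

variable {W : Type*} [NormedAddCommGroup W] [NormedSpace ℂ W]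

lemma tendsto_small (f : Module.End ℂ W) (μ : ℂ) (x : W) (m : ℕ)
    (hx : ((f - μ • 1) ^ m) x = 0) {r : ℝ} (hμ : ‖μ‖ < r) (d : ℕ) :
    Tendsto (fun k : ℕ => ((((k.choose d : ℝ) * r ^ k) : ℝ) : ℂ)⁻¹ • (f ^ k) x)
      atTop (nhds 0) := by
  have hr : 0 < r := lt_of_le_of_lt (norm_nonneg μ) hμ
  set q : ℝ := (‖μ‖ + r) / 2 with hqdef
  have hq0 : 0 < q := by have := norm_nonneg μ; simp [hqdef]; linarith
  have hμq : ‖μ‖ ≤ q := by simp [hqdef]; linarith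
  have hq : q < r := by simp [hqdef]; linarith
  have heq : ∀ k : ℕ, ((((k.choose d : ℝ) * r ^ k) : ℝ) : ℂ)⁻¹ • (f ^ k) x
      = ∑ j ∈ Finset.range m,
          (((((k.choose d : ℝ) * r ^ k) : ℝ) : ℂ)⁻¹ * ((k.choose j : ℂ) * μ ^ (k - j))) •
            (((f - μ • 1) ^ j) x) := by
    intro k
    rw [pow_apply_eq_sum f μ x m hx k, Finset.smul_sum]
    exact Finset.sum_congr rfl fun j _ => (smul_smul _ _ _)
  refine Tendsto.congr (fun k => (heq k).symm) ?_
  have h0 : (0:W) = ∑ j ∈ Finset.range m, (0:W) := by simp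
  rw [h0]
  refine tendsto_finset_sum _ fun j _ => ?_
  set y := ((f - μ • 1) ^ j) x
  apply squeeze_zero_norm'
    (a := fun k : ℕ => ((k.choose j : ℝ) * q ^ k / ((k.choose d : ℝ) * r ^ k)) * ((q ^ j)⁻¹ * ‖y‖))
  · filter_upwards [eventually_ge_atTop j] with k hk
    have habs : ‖((k.choose j : ℂ) * μ ^ (k - j))‖
        ≤ (k.choose j : ℝ) * (q ^ k / q ^ j) := by
      rw [norm_mul, norm_pow, Complex.norm_natCast]
      have h2 : ‖μ‖ ^ (k - j) ≤ q ^ (k - j) :=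
        pow_le_pow_left₀ (norm_nonneg μ) hμq _
      have h3 : q ^ (k - j) = q ^ k / q ^ j := by
        rw [eq_div_iff (by positivity), ← pow_add]
        congr 1; omega
      rw [← h3]
      exact mul_le_mul_of_nonneg_left h2 (by positivity)
    have hnorm : ‖(((((k.choose d : ℝ) * r ^ k) : ℝ) : ℂ)⁻¹ * ((k.choose j : ℂ) * μ ^ (k - j))) • y‖
        = ((k.choose d : ℝ) * r ^ k)⁻¹ * ‖((k.choose j : ℂ) * μ ^ (k - j))‖ * ‖y‖ := by
      rw [norm_smul, norm_mul, norm_inv, Complex.norm_real, Real.norm_eq_abs,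
        abs_of_nonneg (by positivity)]
    rw [hnorm]
    have hA : ((k.choose d : ℝ) * r ^ k)⁻¹ * ‖((k.choose j : ℂ) * μ ^ (k - j))‖ * ‖y‖
        ≤ ((k.choose d : ℝ) * r ^ k)⁻¹ * ((k.choose j : ℝ) * (q ^ k / q ^ j)) * ‖y‖ := by
      have h4 : (0:ℝ) ≤ ((k.choose d : ℝ) * r ^ k)⁻¹ := by positivity
      exact mul_le_mul_of_nonneg_right (mul_le_mul_of_nonneg_left habs h4) (norm_nonneg _)
    refine hA.trans (le_of_eq ?_)
    field_simp
  · have := (tendsto_choose_mul_pow j d hq0 hq).mul_const ((q ^ j)⁻¹ * ‖y‖)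
    simpa using this

lemma tendsto_dominant (f : Module.End ℂ W) {r : ℝ} (hr : 0 < r) (x : W) (d : ℕ)
    (hx : ((f - (r:ℂ) • 1) ^ (d+1)) x = 0) :
    Tendsto (fun k : ℕ => ((((k.choose d : ℝ) * r ^ k) : ℝ) : ℂ)⁻¹ • (f ^ k) x) atTop
      (nhds ((((r ^ d : ℝ)) : ℂ)⁻¹ • (((f - (r:ℂ) • 1) ^ d) x))) := by
  have heq : ∀ k : ℕ, ((((k.choose d : ℝ) * r ^ k) : ℝ) : ℂ)⁻¹ • (f ^ k) x
      = (∑ j ∈ Finset.range d,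
          (((((k.choose d : ℝ) * r ^ k) : ℝ) : ℂ)⁻¹ * ((k.choose j : ℂ) * (r:ℂ) ^ (k - j))) •
            (((f - (r:ℂ) • 1) ^ j) x))
        + (((((k.choose d : ℝ) * r ^ k) : ℝ) : ℂ)⁻¹ * ((k.choose d : ℂ) * (r:ℂ) ^ (k - d))) •
            (((f - (r:ℂ) • 1) ^ d) x) := by
    intro k
    rw [pow_apply_eq_sum f (r:ℂ) x (d+1) hx k, Finset.smul_sum, Finset.sum_range_succ]
    rw [smul_smul]
    congr 1
    exact Finset.sum_congr rfl fun j _ => (smul_smul _ _ _)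
  refine Tendsto.congr (fun k => (heq k).symm) ?_
  have hlim : nhds ((((r ^ d : ℝ)) : ℂ)⁻¹ • (((f - (r:ℂ) • 1) ^ d) x))
      = nhds ((0:W) + (((r ^ d : ℝ)) : ℂ)⁻¹ • (((f - (r:ℂ) • 1) ^ d) x)) := by rw [zero_add]
  rw [hlim]
  apply Tendsto.add
  · -- subdominant terms
    have h0 : (0:W) = ∑ j ∈ Finset.range d, (0:W) := by simp
    rw [h0]
    refine tendsto_finset_sum _ fun j hj => ?_
    have hjd : j < d := Finset.mem_range.mp hj
    set y := ((f - (r:ℂ) • 1) ^ j) x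
    apply squeeze_zero_norm'
      (a := fun k : ℕ => ((k.choose j : ℝ) / (k.choose d : ℝ)) * ((r ^ j)⁻¹ * ‖y‖))
    · filter_upwards [eventually_ge_atTop d] with k hk
      have hjk : j ≤ k := le_trans hjd.le hk
      have hcd : (0:ℝ) < (k.choose d : ℝ) := by exact_mod_cast Nat.choose_pos hk
      have hnorm : ‖(((((k.choose d : ℝ) * r ^ k) : ℝ) : ℂ)⁻¹ * ((k.choose j : ℂ) * (r:ℂ) ^ (k - j))) • y‖
          = ((k.choose d : ℝ) * r ^ k)⁻¹ * ((k.choose j : ℝ) * r ^ (k - j)) * ‖y‖ := by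
        rw [norm_smul, norm_mul, norm_inv, Complex.norm_real, Real.norm_eq_abs,
          abs_of_nonneg (by positivity), norm_mul, norm_pow, Complex.norm_natCast,
          Complex.norm_real, Real.norm_eq_abs, abs_of_nonneg hr.le]
      rw [hnorm]
      apply le_of_eq
      have hrkj : r ^ (k - j) = r ^ k / r ^ j := by
        rw [eq_div_iff (by positivity), ← pow_add]; congr 1; omega
      rw [hrkj]
      field_simp
    · have := (tendsto_choose_div_choose hjd).mul_const ((r ^ j)⁻¹ * ‖y‖)
      simpa using this
  · -- dominant term
    apply Tendsto.congr' ?_ tendsto_const_nhds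
    filter_upwards [eventually_ge_atTop d] with k hk
    have hcd : (k.choose d : ℝ) ≠ 0 := by
      exact_mod_cast (Nat.choose_pos hk).ne'
    have hscval : (((((k.choose d : ℝ) * r ^ k) : ℝ) : ℂ)⁻¹ * ((k.choose d : ℂ) * (r:ℂ) ^ (k - d)))
        = (((r ^ d : ℝ)) : ℂ)⁻¹ := by
      have hrne : (r:ℂ) ≠ 0 := Complex.ofReal_ne_zero.mpr hr.ne'
      have hcdc : ((k.choose d : ℕ) : ℂ) ≠ 0 := Nat.cast_ne_zero.mpr (Nat.choose_pos hk).ne'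
      push_cast
      field_simp
      rw [← pow_add]
      congr 2
      omega
    rw [hscval]

section Plumbing
variable {n : ℕ}

lemma mulVec_map_ofReal (A : Matrix (Fin n) (Fin n) ℝ) (x : Fin n → ℝ) :
    (A.map Complex.ofReal).mulVec (fun i => (x i : ℂ)) = fun i => ((A.mulVec x) i : ℂ) := by
  funext i
  simp only [Matrix.mulVec, dotProduct, Matrix.map_apply]
  push_cast
  rfl

lemma iter_eq (A : Matrix (Fin n) (Fin n) ℝ) (k : ℕ) (x : Fin n → ℝ) :
    (((A.map Complex.ofReal).mulVecLin) ^ k) (fun i => (x i : ℂ))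
      = fun i => (((A ^ k).mulVec x) i : ℂ) := by
  induction k with
  | zero => simp [Matrix.one_mulVec]
  | succ k ih =>
    rw [pow_succ', Module.End.mul_apply, ih, Matrix.mulVecLin_apply, mulVec_map_ofReal,
      pow_succ']
    congr 1
    rw [← Matrix.mulVec_mulVec]

lemma mulVec_pos (hn : 0 < n) (A : Matrix (Fin n) (Fin n) ℝ) (hA : ∀ i j, 0 < A i j)
    (x : Fin n → ℝ) (hx : ∀ i, 0 ≤ x i) (hx' : ∃ i, 0 < x i) :
    ∀ i, 0 < A.mulVec x i := by
  intro i
  obtain ⟨j, hj⟩ := hx'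
  show 0 < dotProduct (A i) x
  rw [dotProduct]
  apply Finset.sum_pos' (fun l _ => mul_nonneg (hA i l).le (hx l))
  exact ⟨j, Finset.mem_univ j, mul_pos (hA i j) hj⟩

lemma iter_pos (hn : 0 < n) (A : Matrix (Fin n) (Fin n) ℝ) (hA : ∀ i j, 0 < A i j) (k : ℕ) :
    ∀ i, 0 < ((A ^ k).mulVec (fun _ => (1:ℝ))) i := by
  induction k with
  | zero => intro i; simp [Matrix.one_mulVec]
  | succ k ih =>
    intro i
    rw [pow_succ', ← Matrix.mulVec_mulVec]
    exact mulVec_pos hn A hA _ (fun l => (ih l).le) ⟨⟨0, hn⟩, ih _⟩ i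

lemma iter_lower (hn : 0 < n) (A : Matrix (Fin n) (Fin n) ℝ) (hA : ∀ i j, 0 < A i j)
    {r : ℝ} {v : Fin n → ℝ} (hAv : A.mulVec v = r • v) {t : ℝ} (ht : 0 ≤ t)
    (ht1 : ∀ i, t * v i ≤ 1) (hv : ∀ i, 0 ≤ v i) (k : ℕ) :
    ∀ i, t * (r ^ k * v i) ≤ ((A ^ k).mulVec (fun _ => (1:ℝ))) i := by
  induction k with
  | zero => intro i; simpa [Matrix.one_mulVec] using ht1 i
  | succ k ih =>
    intro i
    rw [pow_succ' A k, ← Matrix.mulVec_mulVec]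
    have hmono : ∀ i, (A.mulVec (fun l => t * (r ^ k * v l))) i
        ≤ (A.mulVec ((A ^ k).mulVec (fun _ => (1:ℝ)))) i := by
      intro i
      show dotProduct (A i) _ ≤ dotProduct (A i) _
      rw [dotProduct, dotProduct]
      apply Finset.sum_le_sum
      intro l _
      exact mul_le_mul_of_nonneg_left (ih l) (hA i l).le
    refine le_trans ?_ (hmono i)
    have : A.mulVec (fun l => t * (r ^ k * v l)) = (t * r ^ k) • A.mulVec v := by
      have harg : (fun l => t * (r ^ k * v l)) = (t * r ^ k) • v := by
        funext l
        simp only [Pi.smul_apply, smul_eq_mul]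
        ring
      rw [harg, Matrix.mulVec_smul]
    rw [this, hAv]
    simp only [Pi.smul_apply, smul_eq_mul]
    exact le_of_eq (by ring)

end Plumbing


/-- Power method for positive matrices: if `A` has strictly positive entries,
`A·v = r·v` with `r > 0`, `v` strictly positive, and every complex eigenvalue
`μ ≠ r` of `A` satisfies `|μ| < r`, then the normalized power iterates
`Aᵏ𝟙 / ‖Aᵏ𝟙‖` (Euclidean norm) converge to `v / ‖v‖`. -/
theorem power_method_positive_matrix (n : ℕ)
    (A : Matrix (Fin n) (Fin n) ℝ) (hA : ∀ i j, 0 < A i j)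
    (r : ℝ) (hr : 0 < r) (v : Fin n → ℝ) (hv : ∀ i, 0 < v i)
    (hAv : A.mulVec v = r • v)
    (hdom : ∀ μ : ℂ, (∃ w : Fin n → ℂ, w ≠ 0 ∧
        (A.map (Complex.ofReal)).mulVec w = μ • w) →
      μ ≠ (r : ℂ) → ‖μ‖ < r) :
    Tendsto
      (fun k : ℕ =>
        ‖toEucR n ((A ^ k).mulVec (fun _ => 1))‖⁻¹ •
          toEucR n ((A ^ k).mulVec (fun _ => 1)))
      atTop (nhds (‖toEucR n v‖⁻¹ • toEucR n v)) := by
  classical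
  rcases Nat.eq_zero_or_pos n with hn | hn
  · subst hn
    haveI : Subsingleton (EuclideanSpace ℝ (Fin 0)) := ⟨fun a b => WithLp.ofLp_injective 2 (funext fun i => Fin.elim0 i)⟩
    exact Tendsto.congr (fun k => Subsingleton.elim _ _) tendsto_const_nhds
  set M : Matrix (Fin n) (Fin n) ℂ := A.map Complex.ofReal with hM
  set f : Module.End ℂ (Fin n → ℂ) := M.mulVecLin with hf
  set oneC : Fin n → ℂ := fun _ => 1 with honeC
  -- decomposition of the all-ones vector into generalized eigenvectors
  have htop : oneC ∈ ⨆ μ : ℂ, f.maxGenEigenspace μ := by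
    rw [Module.End.iSup_maxGenEigenspace_eq_top]; trivial
  obtain ⟨c, hc, hcsum⟩ := (Submodule.mem_iSup_iff_exists_finsupp _ _).mp htop
  -- all other eigenvalues are strictly smaller
  have habs : ∀ μ ∈ c.support, μ ≠ (r : ℂ) → ‖μ‖ < r := by
    intro μ hμ hne
    have hx0 : c μ ≠ 0 := Finsupp.mem_support_iff.mp hμ
    obtain ⟨m, hm⟩ := (Module.End.mem_maxGenEigenspace f μ (c μ)).mp (hc μ)
    have hgen : f.HasGenEigenvalue μ m := by
      rw [Module.End.hasGenEigenvalue_iff]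
      exact Submodule.ne_bot_iff _ |>.mpr
        ⟨c μ, Module.End.mem_genEigenspace_nat.mpr (LinearMap.mem_ker.mpr hm), hx0⟩
    obtain ⟨w, hw⟩ := (Module.End.hasEigenvalue_of_hasGenEigenvalue hgen).exists_hasEigenvector
    exact hdom μ ⟨w, hw.2, by
      rw [← Matrix.mulVecLin_apply]
      exact Module.End.mem_eigenspace_iff.mp hw.1⟩ hne
  -- the key limit, for the right choice of `d`
  have key : ∀ d : ℕ, ((f - (r:ℂ) • 1) ^ (d+1)) (c (r:ℂ)) = 0 →
      Tendsto (fun k : ℕ => ((((k.choose d : ℝ) * r ^ k) : ℝ) : ℂ)⁻¹ • (f ^ k) oneC) atTop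
        (nhds ((((r ^ d : ℝ)) : ℂ)⁻¹ • (((f - (r:ℂ) • 1) ^ d) (c (r:ℂ))))) := by
    intro d hd
    set s : Finset ℂ := insert (r:ℂ) c.support with hs
    have hone : oneC = ∑ μ ∈ s, c μ := by
      rw [← hcsum]
      exact Finsupp.sum_of_support_subset c (Finset.subset_insert _ _) _ (fun i _ => rfl)
    have heq : ∀ k : ℕ, ((((k.choose d : ℝ) * r ^ k) : ℝ) : ℂ)⁻¹ • (f ^ k) oneC
        = ∑ μ ∈ s, ((((k.choose d : ℝ) * r ^ k) : ℝ) : ℂ)⁻¹ • (f ^ k) (c μ) := by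
      intro k
      rw [hone, map_sum, Finset.smul_sum]
    refine Tendsto.congr (fun k => (heq k).symm) ?_
    have hval : ((((r ^ d : ℝ)) : ℂ)⁻¹ • (((f - (r:ℂ) • 1) ^ d) (c (r:ℂ))))
        = ∑ μ ∈ s, (if μ = (r:ℂ) then
            (((r ^ d : ℝ)) : ℂ)⁻¹ • (((f - (r:ℂ) • 1) ^ d) (c (r:ℂ))) else 0) := by
      rw [Finset.sum_ite_eq' s ((r:ℂ))
        (fun _ => (((r ^ d : ℝ)) : ℂ)⁻¹ • (((f - (r:ℂ) • 1) ^ d) (c (r:ℂ))))]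
      rw [if_pos (Finset.mem_insert_self _ _)]
    rw [hval]
    refine tendsto_finset_sum _ fun μ hμ => ?_
    by_cases hμr : μ = (r:ℂ)
    · rw [if_pos hμr]; subst hμr
      exact tendsto_dominant f hr (c _) d hd
    · rw [if_neg hμr]
      have hsup : μ ∈ c.support := by
        rcases Finset.mem_insert.mp hμ with h | h
        · exact absurd h hμr
        · exact h
      obtain ⟨m, hm⟩ := (Module.End.mem_maxGenEigenspace f μ (c μ)).mp (hc μ)
      exact tendsto_small f μ (c μ) m hm (habs μ hsup hμr) d
  set oneR : Fin n → ℝ := fun _ => (1:ℝ) with honeR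
  have honeCR : (fun i => ((oneR i : ℝ) : ℂ)) = oneC := funext fun i => Complex.ofReal_one
  have hcomp : ∀ (d : ℕ) (L : Fin n → ℂ),
      Tendsto (fun k : ℕ => ((((k.choose d : ℝ) * r ^ k) : ℝ) : ℂ)⁻¹ • (f ^ k) oneC)
        atTop (nhds L) →
      ∀ i, Tendsto (fun k : ℕ => (((k.choose d : ℝ) * r ^ k))⁻¹ * ((A ^ k).mulVec oneR i))
            atTop (nhds ((L i).re))
          ∧ (L i).im = 0 := by
    intro d L h i
    have h1 : Tendsto (fun k => (((((k.choose d : ℝ) * r ^ k) : ℝ) : ℂ)⁻¹ • (f ^ k) oneC) i)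
        atTop (nhds (L i)) := (tendsto_pi_nhds.mp h) i
    have h2 : ∀ k : ℕ, (((((k.choose d : ℝ) * r ^ k) : ℝ) : ℂ)⁻¹ • (f ^ k) oneC) i
        = (((((k.choose d : ℝ) * r ^ k))⁻¹ * ((A ^ k).mulVec oneR i) : ℝ) : ℂ) := by
      intro k
      have h3 : (f ^ k) oneC = fun i => (((A ^ k).mulVec oneR i : ℝ) : ℂ) := by
        rw [← honeCR]
        exact iter_eq A k oneR
      rw [h3]
      show (((((k.choose d : ℝ) * r ^ k) : ℝ)) : ℂ)⁻¹ * (((A ^ k).mulVec oneR i : ℝ) : ℂ) = _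
      push_cast
      ring
    have h1' : Tendsto (fun k : ℕ =>
        (((((k.choose d : ℝ) * r ^ k))⁻¹ * ((A ^ k).mulVec oneR i) : ℝ) : ℂ))
        atTop (nhds (L i)) := Tendsto.congr (fun k => h2 k) h1
    constructor
    · have hre := (Complex.continuous_re.tendsto (L i)).comp h1'
      exact Tendsto.congr (fun k => Complex.ofReal_re _) hre
    · have him := (Complex.continuous_im.tendsto (L i)).comp h1'
      have him' : Tendsto (fun _ : ℕ => (0:ℝ)) atTop (nhds ((L i).im)) :=
        Tendsto.congr (fun k => Complex.ofReal_im _) him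
      exact tendsto_nhds_unique him' tendsto_const_nhds
  by_cases hzero : c (r:ℂ) = 0
  · exfalso
    have hkey0 := key 0 (by rw [pow_one, hzero]; exact map_zero _)
    have hL : ((((r ^ (0:ℕ) : ℝ)) : ℂ)⁻¹ • (((f - (r:ℂ) • 1) ^ (0:ℕ)) (c (r:ℂ)))) = 0 := by
      rw [hzero]; simp
    rw [hL] at hkey0
    set i0 : Fin n := ⟨0, hn⟩ with hi0def
    have hi := (hcomp 0 0 hkey0 i0).1
    simp only [Pi.zero_apply, Complex.zero_re] at hi
    set t : ℝ := (∑ i, v i)⁻¹ with htdef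
    have hvsum : 0 < ∑ i, v i := Finset.sum_pos (fun i _ => hv i) ⟨i0, Finset.mem_univ _⟩
    have ht : 0 < t := inv_pos.mpr hvsum
    have ht1 : ∀ i, t * v i ≤ 1 := by
      intro i
      rw [htdef, inv_mul_le_iff₀ hvsum, mul_one]
      exact Finset.single_le_sum (fun i _ => (hv i).le) (Finset.mem_univ i)
    have hlow := iter_lower hn A hA hAv ht.le ht1 (fun i => (hv i).le)
    have hge : ∀ k : ℕ, t * v i0 ≤ (((k.choose 0 : ℝ) * r ^ k))⁻¹ * ((A ^ k).mulVec oneR i0) := by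
      intro k
      have hlk := hlow k i0
      rw [Nat.choose_zero_right, Nat.cast_one, one_mul, le_inv_mul_iff₀ (pow_pos hr k)]
      calc r ^ k * (t * v i0) = t * (r ^ k * v i0) := by ring
        _ ≤ _ := hlk
    have hcontra : t * v i0 ≤ 0 := ge_of_tendsto' hi hge
    have : 0 < t * v i0 := mul_pos ht (hv i0)
    linarith
  · -- main case : c r ≠ 0
    have hex : ∃ m : ℕ, ((f - (r:ℂ) • 1) ^ m) (c (r:ℂ)) = 0 :=
      (Module.End.mem_maxGenEigenspace f (r:ℂ) (c (r:ℂ))).mp (hc (r:ℂ))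
    have hm0pos : 0 < Nat.find hex := by
      rcases Nat.eq_zero_or_pos (Nat.find hex) with h | h
      · exfalso
        apply hzero
        have hspec := Nat.find_spec hex
        rw [h, pow_zero] at hspec
        simpa using hspec
      · exact h
    set d : ℕ := Nat.find hex - 1 with hddef
    have hd1 : d + 1 = Nat.find hex := by omega
    have hNd1 : ((f - (r:ℂ) • 1) ^ (d+1)) (c (r:ℂ)) = 0 := by
      rw [hd1]; exact Nat.find_spec hex
    have hNd : ((f - (r:ℂ) • 1) ^ d) (c (r:ℂ)) ≠ 0 := Nat.find_min hex (by omega)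
    have hkey := key d hNd1
    set L : Fin n → ℂ := (((r ^ d : ℝ)) : ℂ)⁻¹ • (((f - (r:ℂ) • 1) ^ d) (c (r:ℂ))) with hLdef
    have hLne : L ≠ 0 :=
      smul_ne_zero (inv_ne_zero (Complex.ofReal_ne_zero.mpr (pow_pos hr d).ne')) hNd
    set uR : Fin n → ℝ := fun i => (L i).re with huRdef
    have hcompL := hcomp d L hkey
    have hgR : Tendsto (fun k : ℕ =>
        (fun i => (((k.choose d : ℝ) * r ^ k))⁻¹ * ((A ^ k).mulVec oneR i))) atTop (nhds uR) :=
      tendsto_pi_nhds.mpr (fun i => (hcompL i).1)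
    have hLuR : L = fun i => ((uR i : ℝ) : ℂ) := by
      funext i
      apply Complex.ext
      · simp [huRdef]
      · simp [(hcompL i).2]
    have huRne : uR ≠ 0 := by
      intro h
      apply hLne
      rw [hLuR, h]
      funext i; simp
    have huRnonneg : ∀ i, 0 ≤ uR i := by
      intro i
      apply ge_of_tendsto' ((hcompL i).1)
      intro k
      have h1 : (0:ℝ) ≤ (((k.choose d : ℝ) * r ^ k))⁻¹ := by positivity
      exact mul_nonneg h1 (iter_pos hn A hA k i).le
    have hfL : f L = (r:ℂ) • L := by
      have h1 : (f - (r:ℂ) • 1) (((f - (r:ℂ) • 1) ^ d) (c (r:ℂ))) = 0 := by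
        rw [← Module.End.mul_apply, ← pow_succ']
        exact hNd1
      rw [LinearMap.sub_apply, LinearMap.smul_apply, Module.End.one_apply] at h1
      have h2 : f (((f - (r:ℂ) • 1) ^ d) (c (r:ℂ)))
          = (r:ℂ) • (((f - (r:ℂ) • 1) ^ d) (c (r:ℂ))) := sub_eq_zero.mp h1
      rw [hLdef, map_smul, h2, smul_comm]
    have h4 : f (fun i => ((uR i : ℝ) : ℂ)) = fun i => (((A.mulVec uR) i : ℝ) : ℂ) := by
      calc f (fun i => ((uR i : ℝ) : ℂ)) = M.mulVec (fun i => ((uR i : ℝ) : ℂ)) :=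
            Matrix.mulVecLin_apply _ _
        _ = fun i => (((A.mulVec uR) i : ℝ) : ℂ) := mulVec_map_ofReal A uR
    have hAuR : A.mulVec uR = r • uR := by
      funext i
      have h5 : f L = fun i => (((A.mulVec uR) i : ℝ) : ℂ) := by rw [hLuR]; exact h4
      have h6 := congrFun (hfL.symm.trans h5) i
      apply Complex.ofReal_injective
      show ((A.mulVec uR i : ℝ) : ℂ) = (((r • uR) i : ℝ) : ℂ)
      rw [← h6, hLuR]
      simp only [Pi.smul_apply, smul_eq_mul]
      push_cast
      ring
    have huRpos : ∀ i, 0 < uR i := by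
      have hAu : ∀ i, 0 < A.mulVec uR i := by
        obtain ⟨j, hj⟩ := Function.ne_iff.mp huRne
        exact mulVec_pos hn A hA uR huRnonneg
          ⟨j, lt_of_le_of_ne (huRnonneg j) (Ne.symm (by simpa using hj))⟩
      intro i
      have h7 := congrFun hAuR i
      have h8 : 0 < r * uR i := by
        have := hAu i
        rw [h7] at this
        simpa using this
      nlinarith [hr]
    obtain ⟨i0m, _, hi0m⟩ := Finset.exists_min_image Finset.univ (fun i => uR i / v i)
      ⟨⟨0, hn⟩, Finset.mem_univ _⟩
    have hscpos : 0 < uR i0m / v i0m := div_pos (huRpos i0m) (hv i0m)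
    set sc : ℝ := uR i0m / v i0m with hscdef
    set w : Fin n → ℝ := fun i => uR i - sc * v i with hwdef
    have hwnn : ∀ i, 0 ≤ w i := by
      intro i
      have h1 : sc ≤ uR i / v i := hi0m i (Finset.mem_univ i)
      rw [le_div_iff₀ (hv i)] at h1
      simp only [hwdef]
      linarith
    have hw0 : w i0m = 0 := by
      show uR i0m - sc * v i0m = 0
      rw [hscdef, div_mul_cancel₀ _ (hv i0m).ne']
      ring
    have hAw : A.mulVec w = r • w := by
      have hweq : w = uR - sc • v := by
        funext i
        simp only [hwdef, Pi.sub_apply, Pi.smul_apply, smul_eq_mul]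
      rw [hweq, Matrix.mulVec_sub, Matrix.mulVec_smul, hAuR, hAv]
      funext i
      simp only [Pi.sub_apply, Pi.smul_apply, smul_eq_mul]
      ring
    have hwzero : w = 0 := by
      by_contra hne
      obtain ⟨j, hj⟩ := Function.ne_iff.mp hne
      have hjpos : 0 < w j := lt_of_le_of_ne (hwnn j) (Ne.symm (by simpa using hj))
      have h1 : 0 < A.mulVec w i0m := mulVec_pos hn A hA w hwnn ⟨j, hjpos⟩ i0m
      rw [hAw] at h1
      simp only [Pi.smul_apply, smul_eq_mul, hw0, mul_zero] at h1
      exact lt_irrefl 0 h1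
    have huReq : uR = sc • v := by
      funext i
      have h9 := congrFun hwzero i
      simp only [hwdef, Pi.zero_apply] at h9
      simp only [Pi.smul_apply, smul_eq_mul]
      linarith
    -- final assembly
    have hscale : ∀ (c' : ℝ), 0 < c' → ∀ x : Fin n → ℝ,
        ‖toEucR n (c' • x)‖⁻¹ • toEucR n (c' • x) = ‖toEucR n x‖⁻¹ • toEucR n x := by
      intro c' hc' x
      have h1 : toEucR n (c' • x) = c' • toEucR n x := rfl
      rw [h1, norm_smul, Real.norm_eq_abs, abs_of_pos hc', mul_inv, smul_smul]
      rw [show c'⁻¹ * ‖toEucR n x‖⁻¹ * c' = ‖toEucR n x‖⁻¹ by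
        rw [mul_comm, ← mul_assoc, mul_inv_cancel₀ hc'.ne', one_mul]]
    have hEuc : Continuous (toEucR n) := by
        show Continuous (fun x : Fin n → ℝ => WithLp.toLp 2 x); fun_prop
    have htE : Tendsto (fun k : ℕ => toEucR n
        (fun i => (((k.choose d : ℝ) * r ^ k))⁻¹ * ((A ^ k).mulVec oneR i)))
        atTop (nhds (toEucR n uR)) := (hEuc.tendsto _).comp hgR
    have hnorm_ne : ‖toEucR n uR‖ ≠ 0 := by
      rw [norm_ne_zero_iff]
      exact fun h => huRne (by simpa [toEucR] using h)
    have hmain : Tendsto (fun k : ℕ =>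
        ‖toEucR n (fun i => (((k.choose d : ℝ) * r ^ k))⁻¹ * ((A ^ k).mulVec oneR i))‖⁻¹ •
          toEucR n (fun i => (((k.choose d : ℝ) * r ^ k))⁻¹ * ((A ^ k).mulVec oneR i)))
        atTop (nhds (‖toEucR n uR‖⁻¹ • toEucR n uR)) :=
      Tendsto.smul (htE.norm.inv₀ hnorm_ne) htE
    have hlimit : ‖toEucR n uR‖⁻¹ • toEucR n uR = ‖toEucR n v‖⁻¹ • toEucR n v := by
      rw [huReq]
      exact hscale sc hscpos v
    rw [← hlimit]
    apply Tendsto.congr' ?_ hmain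
    filter_upwards [eventually_ge_atTop d] with k hk
    have hck : 0 < ((k.choose d : ℝ) * r ^ k) := by
      have h1 : 0 < k.choose d := Nat.choose_pos hk
      have h2 : (0:ℝ) < (k.choose d : ℝ) := by exact_mod_cast h1
      positivity
    have h2 : (A ^ k).mulVec oneR = ((k.choose d : ℝ) * r ^ k) •
        (fun i => (((k.choose d : ℝ) * r ^ k))⁻¹ * ((A ^ k).mulVec oneR i)) := by
      funext i
      simp only [Pi.smul_apply, smul_eq_mul]
      field_simp
      rw [mul_div_cancel_right₀ _ (Nat.cast_ne_zero.mpr (Nat.choose_pos hk).ne')]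
    conv_rhs => rw [h2]
    exact (hscale _ hck _).symm
end
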